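/- Let a < b be reals, L : ℝ × ℝ × ℝ × ℝ → ℝ smooth (depending on t, y, y', y''), y : ℝ → ℝ smooth, and Y : ℝ → ℝ smooth with Y and Y' vanishing at a and b. Then ∫_a^b (L_y Y + L_{z} Y' + L_{w} Y'') dt = ∫_a^b (L_y - (d/dt) L_z + (d²/dt²) L_w) Y dt, where each partial derivative of L is evaluated along (t, y t, y' t, y'' t). -/

import Mathlib

open intervalIntegral

/-- Partial derivative of `L : ℝ × ℝ × ℝ × ℝ → ℝ` in its second slot. -/
noncomputable def pdY (L : ℝ × ℝ × ℝ × ℝ → ℝ) (p : ℝ × ℝ × ℝ × ℝ) : ℝ :=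
  fderiv ℝ L p ((0 : ℝ), (1 : ℝ), (0 : ℝ), (0 : ℝ))

/-- Partial derivative of `L : ℝ × ℝ × ℝ × ℝ → ℝ` in its third slot. -/
noncomputable def pdZ (L : ℝ × ℝ × ℝ × ℝ → ℝ) (p : ℝ × ℝ × ℝ × ℝ) : ℝ :=
  fderiv ℝ L p ((0 : ℝ), (0 : ℝ), (1 : ℝ), (0 : ℝ))

/-- Partial derivative of `L : ℝ × ℝ × ℝ × ℝ → ℝ` in its fourth slot. -/
noncomputable def pdW (L : ℝ × ℝ × ℝ × ℝ → ℝ) (p : ℝ × ℝ × ℝ × ℝ) : ℝ :=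
  fderiv ℝ L p ((0 : ℝ), (0 : ℝ), (0 : ℝ), (1 : ℝ))

lemma smooth_deriv {f : ℝ → ℝ} (hf : ContDiff ℝ (⊤ : ℕ∞) f) : ContDiff ℝ (⊤ : ℕ∞) (deriv f) := by
  have h : ContDiff ℝ (⊤ : ℕ∞) (fderiv ℝ f) := hf.fderiv_right (by exact_mod_cast le_top)
  have : deriv f = fun x => fderiv ℝ f x 1 := by funext x; rfl
  rw [this]
  exact h.clm_apply contDiff_const

lemma smooth_pd_comp (L : ℝ × ℝ × ℝ × ℝ → ℝ) (hL : ContDiff ℝ (⊤ : ℕ∞) L)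
    (y : ℝ → ℝ) (hy : ContDiff ℝ (⊤ : ℕ∞) y) (v : ℝ × ℝ × ℝ × ℝ) :
    ContDiff ℝ (⊤ : ℕ∞) (fun t : ℝ => fderiv ℝ L (t, y t, deriv y t, deriv (deriv y) t) v) := by
  have hγ : ContDiff ℝ (⊤ : ℕ∞) (fun t : ℝ => ((t, y t, deriv y t, deriv (deriv y) t) : ℝ × ℝ × ℝ × ℝ)) :=
    contDiff_id.prodMk (hy.prodMk ((smooth_deriv hy).prodMk (smooth_deriv (smooth_deriv hy))))
  have hF : ContDiff ℝ (⊤ : ℕ∞) (fun p => fderiv ℝ L p v) :=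
    (hL.fderiv_right (by simp)).clm_apply contDiff_const
  exact hF.comp hγ

theorem second_order_integration_by_parts
    (a b : ℝ) (hab : a < b)
    (L : ℝ × ℝ × ℝ × ℝ → ℝ) (hL : ContDiff ℝ (⊤ : ℕ∞) L)
    (y Y : ℝ → ℝ) (hy : ContDiff ℝ (⊤ : ℕ∞) y) (hY : ContDiff ℝ (⊤ : ℕ∞) Y)
    (hYa : Y a = 0) (hYb : Y b = 0)
    (hY'a : deriv Y a = 0) (hY'b : deriv Y b = 0) :
    ∫ t in a..b,
        (pdY L (t, y t, deriv y t, deriv (deriv y) t) * Y t +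
          pdZ L (t, y t, deriv y t, deriv (deriv y) t) * deriv Y t +
          pdW L (t, y t, deriv y t, deriv (deriv y) t) * deriv (deriv Y) t) =
      ∫ t in a..b,
        (pdY L (t, y t, deriv y t, deriv (deriv y) t) -
            deriv (fun s => pdZ L (s, y s, deriv y s, deriv (deriv y) s)) t +
            deriv (deriv (fun s => pdW L (s, y s, deriv y s, deriv (deriv y) s))) t) *
          Y t := by
  set P : ℝ → ℝ := fun t => pdY L (t, y t, deriv y t, deriv (deriv y) t) with hP
  set Q : ℝ → ℝ := fun t => pdZ L (t, y t, deriv y t, deriv (deriv y) t) with hQ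
  set R : ℝ → ℝ := fun t => pdW L (t, y t, deriv y t, deriv (deriv y) t) with hR
  have hPs : ContDiff ℝ (⊤ : ℕ∞) P := smooth_pd_comp L hL y hy _
  have hQs : ContDiff ℝ (⊤ : ℕ∞) Q := smooth_pd_comp L hL y hy _
  have hRs : ContDiff ℝ (⊤ : ℕ∞) R := smooth_pd_comp L hL y hy _
  have hQ's := smooth_deriv hQs
  have hR's := smooth_deriv hRs
  have hR''s := smooth_deriv hR's
  have hY's := smooth_deriv hY
  have hY''s := smooth_deriv hY's
  -- generic integration by parts for smooth u, v
  have ibp : ∀ (u v : ℝ → ℝ), ContDiff ℝ (⊤ : ℕ∞) u → ContDiff ℝ (⊤ : ℕ∞) v →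
      ∫ t in a..b, u t * deriv v t =
        u b * v b - u a * v a - ∫ t in a..b, deriv u t * v t := by
    intro u v hu hv
    refine integral_mul_deriv_eq_deriv_mul
      (fun x _ => ((hu.differentiable (by simp)) x).hasDerivAt)
      (fun x _ => ((hv.differentiable (by simp)) x).hasDerivAt)
      (((smooth_deriv hu).continuous).intervalIntegrable a b)
      (((smooth_deriv hv).continuous).intervalIntegrable a b)
  have h1 : (∫ t in a..b, Q t * deriv Y t) = - ∫ t in a..b, deriv Q t * Y t := by
    rw [ibp Q Y hQs hY, hYa, hYb]; ring
  have h2 : (∫ t in a..b, R t * deriv (deriv Y) t) = ∫ t in a..b, deriv (deriv R) t * Y t := by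
    rw [ibp R (deriv Y) hRs hY's, hY'a, hY'b, ibp (deriv R) Y hR's hY, hYa, hYb]; ring
  have int1 : IntervalIntegrable (fun t => P t * Y t) MeasureTheory.volume a b :=
    ((hPs.continuous).mul hY.continuous).intervalIntegrable a b
  have int2 : IntervalIntegrable (fun t => Q t * deriv Y t) MeasureTheory.volume a b :=
    ((hQs.continuous).mul hY's.continuous).intervalIntegrable a b
  have int3 : IntervalIntegrable (fun t => R t * deriv (deriv Y) t) MeasureTheory.volume a b :=
    ((hRs.continuous).mul hY''s.continuous).intervalIntegrable a b
  have int4 : IntervalIntegrable (fun t => deriv Q t * Y t) MeasureTheory.volume a b :=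
    ((hQ's.continuous).mul hY.continuous).intervalIntegrable a b
  have int5 : IntervalIntegrable (fun t => deriv (deriv R) t * Y t) MeasureTheory.volume a b :=
    ((hR''s.continuous).mul hY.continuous).intervalIntegrable a b
  have lhs : (∫ t in a..b, (P t * Y t + Q t * deriv Y t + R t * deriv (deriv Y) t)) =
      (∫ t in a..b, P t * Y t) + (∫ t in a..b, Q t * deriv Y t)
        + ∫ t in a..b, R t * deriv (deriv Y) t := by
    rw [integral_add (int1.add int2) int3, integral_add int1 int2]
  have rhs : (∫ t in a..b, (P t - deriv Q t + deriv (deriv R) t) * Y t) =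
      (∫ t in a..b, P t * Y t) - (∫ t in a..b, deriv Q t * Y t)
        + ∫ t in a..b, deriv (deriv R) t * Y t := by
    have : (fun t => (P t - deriv Q t + deriv (deriv R) t) * Y t) =
        fun t => (P t * Y t - deriv Q t * Y t) + deriv (deriv R) t * Y t := by
      funext t; ring
    rw [this, integral_add (int1.sub int4) int5, integral_sub int1 int4]
  calc (∫ t in a..b, (P t * Y t + Q t * deriv Y t + R t * deriv (deriv Y) t))
      = (∫ t in a..b, P t * Y t) - (∫ t in a..b, deriv Q t * Y t)
          + ∫ t in a..b, deriv (deriv R) t * Y t := by rw [lhs, h1, h2]; ring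
    _ = ∫ t in a..b, (P t - deriv Q t + deriv (deriv R) t) * Y t := rhs.symm
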